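/- Under the assumptions and iteration of the Nesterov scheme with η ≤ 1/L and ρ = (1−√(μη))/(1+√(μη)), the Lyapunov quantity Lₙ = f(xₙ) − inf f + (1/2)‖Π^⊥ vₙ + √μ (x′ₙ − π(x′ₙ))‖² + [(1+√(μη))²/(2(1−√(μη)))]‖Π vₙ‖² satisfies L_{n+1} ≤ (1 − √(μη)) Lₙ. -/

import Mathlib

/-!
Write `s = √(μη)`, `w = Π^⊥ v` and `u = x' - π x'`, both orthogonal to the range of `Π`.
One step of the scheme is a gradient step from the extrapolated point `x'`, and the sufficient
decrease `f(x' - η∇f) ≤ f(x') - η/2 ‖∇f‖²` absorbs every term quadratic in `∇f x'`; what is left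
is linear in `∇f x'`. Splitting it with weights `1 - s` and `s`, the mild non-convexity along
`x → x'` and the strong convexity at `x'` turn it back into `f(x) - inf f`, and the quadratic
terms match thanks to the identity
`(1 - s) ‖w + √μ u‖² = ‖(1 - s) w + √μ u‖² + s (1 - s) ‖w‖² - s μ ‖u‖²`.
-/

open RealInnerProductSpace NNReal Set

variable {E : Type*} [NormedAddCommGroup E] [InnerProductSpace ℝ E]

theorem one_sub_mul_norm_add_sq (s : ℝ) (X Y : E) :
    (1 - s) * ‖X + Y‖ ^ 2 = ‖(1 - s) • X + Y‖ ^ 2 + s * (1 - s) * ‖X‖ ^ 2 - s * ‖Y‖ ^ 2 := by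
  rw [norm_add_sq_real, norm_add_sq_real, norm_smul, real_inner_smul_left, Real.norm_eq_abs,
    mul_pow, sq_abs]
  ring

section Projection

variable {P : E →L[ℝ] E}

theorem inner_map_eq_zero_of_map_eq_zero (hPsym : ∀ x y, ⟪P x, y⟫ = ⟪x, P y⟫) {z : E}
    (hz : P z = 0) (y : E) : ⟪z, P y⟫ = 0 := by
  rw [← hPsym, hz, inner_zero_left]

theorem map_sub_map_self (hPproj : ∀ x, P (P x) = P x) (y : E) : P (y - P y) = 0 := by
  rw [map_sub, hPproj, sub_self]

theorem norm_sq_eq_norm_sub_map_sq_add_norm_map_sq (hPproj : ∀ x, P (P x) = P x)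
    (hPsym : ∀ x y, ⟪P x, y⟫ = ⟪x, P y⟫) (y : E) : ‖y‖ ^ 2 = ‖y - P y‖ ^ 2 + ‖P y‖ ^ 2 := by
  conv_lhs => rw [← sub_add_cancel y (P y)]
  rw [norm_add_sq_real, inner_map_eq_zero_of_map_eq_zero hPsym (map_sub_map_self hPproj y)]
  ring

end Projection

section Gradient

variable [CompleteSpace E]

theorem le_add_inner_gradient_add_norm_sq {f : E → ℝ} {K : ℝ≥0} (hf : Differentiable ℝ f)
    (hlip : LipschitzWith K (gradient f)) (x y : E) :
    f y ≤ f x + ⟪gradient f x, y - x⟫ + K / 2 * ‖y - x‖ ^ 2 := by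
  set u := y - x
  set φ : ℝ → ℝ := fun t ↦ f (x + t • u) - t * ⟪gradient f x, u⟫ - K / 2 * t ^ 2 * ‖u‖ ^ 2
  have hφ : ∀ t,
      HasDerivAt φ (⟪gradient f (x + t • u), u⟫ - ⟪gradient f x, u⟫ - K * t * ‖u‖ ^ 2) t := by
    intro t
    have hline : HasDerivAt (fun t : ℝ ↦ x + t • u) u t := by
      simpa using ((hasDerivAt_id t).smul_const u).const_add x
    have h₁ : HasDerivAt (fun t ↦ f (x + t • u)) ⟪gradient f (x + t • u), u⟫ t := by
      rw [inner_gradient_left]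
      exact (hf (x + t • u)).hasFDerivAt.comp_hasDerivAt t hline
    have h₂ : HasDerivAt (fun t ↦ t * ⟪gradient f x, u⟫) ⟪gradient f x, u⟫ t := by
      simpa using (hasDerivAt_id t).mul_const ⟪gradient f x, u⟫
    have h₃ : HasDerivAt (fun t ↦ K / 2 * t ^ 2 * ‖u‖ ^ 2) (K * t * ‖u‖ ^ 2) t := by
      refine (((hasDerivAt_pow 2 t).const_mul (K / 2 : ℝ)).mul_const (‖u‖ ^ 2)).congr_deriv ?_
      ring
    exact (h₁.sub h₂).sub h₃
  have hφ_nonpos : ∀ t ∈ interior (Icc (0 : ℝ) 1),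
      ⟪gradient f (x + t • u), u⟫ - ⟪gradient f x, u⟫ - K * t * ‖u‖ ^ 2 ≤ 0 := by
    intro t ht
    rw [interior_Icc] at ht
    have hgrad : ‖gradient f (x + t • u) - gradient f x‖ ≤ K * (t * ‖u‖) := by
      simpa [← dist_eq_norm, norm_smul, abs_of_pos ht.1] using hlip.dist_le_mul (x + t • u) x
    have := real_inner_le_norm (gradient f (x + t • u) - gradient f x) u
    rw [inner_sub_left] at this
    nlinarith [norm_nonneg u]
  have h01 : φ 1 ≤ φ 0 := antitoneOn_of_hasDerivWithinAt_nonpos (convex_Icc 0 1)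
    (fun t _ ↦ (hφ t).continuousAt.continuousWithinAt) (fun t _ ↦ (hφ t).hasDerivWithinAt)
    hφ_nonpos (left_mem_Icc.2 zero_le_one) (right_mem_Icc.2 zero_le_one) zero_le_one
  simp only [φ, one_smul, zero_smul, add_zero, one_mul, one_pow, zero_mul, zero_pow two_ne_zero,
    mul_zero, mul_one, sub_zero, show x + u = y from add_sub_cancel x y] at h01
  linarith

theorem apply_sub_smul_gradient_le {f : E → ℝ} {K : ℝ≥0} (hf : Differentiable ℝ f)
    (hlip : LipschitzWith K (gradient f)) {η : ℝ} (hη : 0 ≤ η) (hηK : η * K ≤ 1) (x : E) :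
    f (x - η • gradient f x) ≤ f x - η / 2 * ‖gradient f x‖ ^ 2 := by
  have h := le_add_inner_gradient_add_norm_sq hf hlip x (x - η • gradient f x)
  rw [sub_sub_cancel_left, inner_neg_right, real_inner_smul_right, real_inner_self_eq_norm_sq,
    norm_neg, norm_smul, Real.norm_of_nonneg hη] at h
  nlinarith [mul_nonneg (mul_nonneg hη (sq_nonneg ‖gradient f x‖)) (sub_nonneg.2 hηK)]

end Gradient

noncomputable section Nesterov

variable [CompleteSpace E]

def nesterovLyapunov (f : E → ℝ) (P : E →L[ℝ] E) (π : E → E) (μ η : ℝ) (x v : E) : ℝ :=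
  f x - f (π x) + 1 / 2 * ‖(v - P v) + √μ • (x + √η • v - π (x + √η • v))‖ ^ 2 +
    (1 + √(μ * η)) ^ 2 / (2 * (1 - √(μ * η))) * ‖P v‖ ^ 2

/-- What the gradient step from the extrapolated point `x'` leaves of the next Lyapunov value:
the sufficient decrease has absorbed every term quadratic in `∇f x'`. -/
def nesterovLyapunovBound (f : E → ℝ) (P : E →L[ℝ] E) (π : E → E) (μ η : ℝ) (x' v : E) : ℝ :=
  f x' - f (π x') + 1 / 2 * ‖(1 - √(μ * η)) • (v - P v) + √μ • (x' - π x')‖ ^ 2 +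
    (1 - √(μ * η)) / 2 * ‖P v‖ ^ 2 -
    √η * ⟪gradient f x', (1 - √(μ * η)) • v + √μ • (x' - π x')⟫

variable {f : E → ℝ} {P : E →L[ℝ] E} {π : E → E} {μ η : ℝ}

theorem nesterovLyapunov_gradient_step_le {K : ℝ≥0} (hf : Differentiable ℝ f)
    (hlip : LipschitzWith K (gradient f)) (hμ : 0 ≤ μ) (hη : 0 ≤ η) (hηK : η * K ≤ 1)
    (hPproj : ∀ x, P (P x) = P x) (hPsym : ∀ x y, ⟪P x, y⟫ = ⟪x, P y⟫) {xstar : E}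
    (hxstar : P xstar = 0) (hπdef : ∀ x, π x = P x + xstar) (hπmin : ∀ x y, f (π x) ≤ f y)
    {ρ : ℝ} (hρ : ρ = (1 - √(μ * η)) / (1 + √(μ * η))) (x' v : E) :
    nesterovLyapunov f P π μ η (x' - η • gradient f x') (ρ • (v - √η • gradient f x')) ≤
      nesterovLyapunovBound f P π μ η x' v := by
  have hs : √(μ * η) = √η * √μ := by rw [Real.sqrt_mul hμ, mul_comm]
  have ha : √η ^ 2 = η := Real.sq_sqrt hη
  unfold nesterovLyapunov nesterovLyapunovBound
  set a := √η
  set b := √μ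
  set s := √(μ * η)
  set g := gradient f x'
  set X := (1 - s) • (v - P v) + b • (x' - π x')
  have hs0 : 0 ≤ s := Real.sqrt_nonneg _
  have hρs : ρ * (1 + s) = 1 - s := by rw [hρ]; field_simp
  have hA : ρ • (v - a • g) - P (ρ • (v - a • g)) + b • (x' - η • g + a • ρ • (v - a • g) -
      π (x' - η • g + a • ρ • (v - a • g))) = X - a • (g - P g) := by
    simp only [X, hπdef, map_add, map_sub, map_smul]
    match_scalars
    · linear_combination hρs - ρ * hs
    · linear_combination -a * hρs + b * ha + a * (1 + ρ) * hs
    · linear_combination ρ * hs - hρs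
    · linear_combination a * hρs - b * ha - a * (1 + ρ) * hs
    all_goals ring
  have hB : P (ρ • (v - a • g)) = ρ • (P v - a • P g) := by
    simp only [map_smul, map_sub]
  have hcρ : (1 + s) ^ 2 / (2 * (1 - s)) * ρ ^ 2 = (1 - s) / 2 := by
    rcases eq_or_ne s 1 with hs1 | hs1
    · rw [hs1]; norm_num
    · rw [hρ]
      field_simp [sub_ne_zero.2 hs1.symm]
  have hPX : P X = 0 := by
    simp only [X, hπdef, map_add, map_sub, map_smul, hPproj, hxstar, sub_self, add_zero,
      smul_zero]
  have hXg : ⟪X, g - P g⟫ = ⟪X, g⟫ := by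
    rw [inner_sub_right, inner_map_eq_zero_of_map_eq_zero hPsym hPX, sub_zero]
  have hPvg : ⟪P v, P g⟫ = ⟪P v, g⟫ := by
    rw [hPsym, hPproj, ← hPsym]
  have hv : (1 - s) • v + b • (x' - π x') = X + (1 - s) • P v := by
    simp only [X, smul_sub]
    abel
  have hdesc : f (x' - η • g) ≤ f x' - η / 2 * ‖g‖ ^ 2 :=
    apply_sub_smul_gradient_le hf hlip hη hηK x'
  have hfπ : f (π (x' - η • g)) = f (π x') := le_antisymm (hπmin _ _) (hπmin _ _)
  rw [norm_sq_eq_norm_sub_map_sq_add_norm_map_sq hPproj hPsym g] at hdesc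
  rw [hA, hB, norm_smul, mul_pow, Real.norm_eq_abs, sq_abs, ← mul_assoc, hcρ, norm_sub_sq_real,
    norm_sub_sq_real, hv, inner_add_right, hfπ]
  simp only [norm_smul, inner_smul_right, real_inner_comm g, hXg, hPvg,
    Real.norm_eq_abs, mul_pow, sq_abs, ha]
  linarith [mul_nonneg (mul_nonneg hs0 hη) (sq_nonneg ‖P g‖)]

theorem nesterovLyapunovBound_le (hμ : 0 ≤ μ) (hη : 0 < η) (hμη : μ * η ≤ 1) {ε : ℝ}
    (hε : ε ≤ √(μ / η)) (hPproj : ∀ x, P (P x) = P x) (hPsym : ∀ x y, ⟪P x, y⟫ = ⟪x, P y⟫)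
    (hπmin : ∀ x y, f (π x) ≤ f y)
    (hsc : ∀ x, ⟪gradient f x, x - π x⟫ ≥ f x - f (π x) + μ / 2 * ‖x - π x‖ ^ 2)
    (hnc : ∀ x v, ⟪gradient f (x + v), v⟫ ≥ f (x + v) - f x - ε / 2 * ‖v‖ ^ 2) (x v : E) :
    nesterovLyapunovBound f P π μ η (x + √η • v) v ≤
      (1 - √(μ * η)) * nesterovLyapunov f P π μ η x v := by
  have hs : √(μ * η) = √η * √μ := by rw [Real.sqrt_mul hμ, mul_comm]
  have ha : √η ^ 2 = η := Real.sq_sqrt hη.le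
  have hb : √μ ^ 2 = μ := Real.sq_sqrt hμ
  have hεη : ε * η ≤ √(μ * η) := by
    calc ε * η ≤ √(μ / η) * η := mul_le_mul_of_nonneg_right hε hη.le
      _ = √(μ * η) := by
        rw [Real.sqrt_div hμ, hs]
        field_simp [(Real.sqrt_pos.2 hη).ne']
        rw [ha]
  have hs1 : √(μ * η) ≤ 1 := Real.sqrt_le_one.mpr hμη
  unfold nesterovLyapunov nesterovLyapunovBound
  set a := √η
  set b := √μ
  set s := √(μ * η)
  set c := (1 + s) ^ 2 / (2 * (1 - s))
  have hs0 : 0 ≤ s := Real.sqrt_nonneg _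
  have hc : (1 - s) * ((1 + s) / 2) ≤ (1 - s) * c := by
    rcases hs1.eq_or_lt with h1 | h1
    · rw [h1]; norm_num
    · rw [show (1 - s) * c = (1 + s) ^ 2 / 2 by simp only [c]; field_simp [(sub_pos.2 h1).ne']]
      nlinarith
  have hnc' := hnc x (a • v)
  rw [norm_smul, Real.norm_eq_abs, mul_pow, sq_abs, ha] at hnc'
  have hsc' := hsc (x + a • v)
  have hfπ : f (π (x + a • v)) = f (π x) := le_antisymm (hπmin _ _) (hπmin _ _)
  have hv := norm_sq_eq_norm_sub_map_sq_add_norm_map_sq hPproj hPsym v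
  set x' := x + a • v
  set g := gradient f x'
  set u := x' - π x'
  have hid := one_sub_mul_norm_add_sq s (v - P v) (b • u)
  rw [norm_smul, Real.norm_eq_abs, mul_pow, sq_abs, hb] at hid
  have hinner : a * ⟪g, (1 - s) • v + b • u⟫ = (1 - s) * ⟪g, a • v⟫ + s * ⟪g, u⟫ := by
    simp only [inner_add_right, real_inner_smul_right, hs]
    ring
  rw [hinner, hfπ]
  rw [hfπ] at hsc'
  have h1 := mul_le_mul_of_nonneg_left hnc' (sub_nonneg.2 hs1)
  have h2 := mul_le_mul_of_nonneg_left hsc' hs0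
  have h3 := mul_le_mul_of_nonneg_left (mul_le_mul_of_nonneg_right hεη (sq_nonneg ‖v‖))
    (sub_nonneg.2 hs1)
  rw [hv] at h1 h3
  linarith [mul_le_mul_of_nonneg_right hc (sq_nonneg ‖P v‖)]

end Nesterov

theorem stmt_17_general {d : ℕ} (f : EuclideanSpace ℝ (Fin d) → ℝ) (L μ η ε : ℝ)
    (hL : 0 < L) (hμ : 0 < μ) (hμL : μ ≤ L) (hη : 0 < η) (hηL : η ≤ 1 / L)
    (hεbound : ε ≤ Real.sqrt (μ / η))
    (hf : ContDiff ℝ 1 f)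
    (hlip : LipschitzWith (Real.toNNReal L) (gradient f))
    (P : EuclideanSpace ℝ (Fin d) →L[ℝ] EuclideanSpace ℝ (Fin d))
    (hPproj : ∀ x, P (P x) = P x)
    (hPsym : ∀ x y, ⟪P x, y⟫ = ⟪x, P y⟫)
    (xstar : EuclideanSpace ℝ (Fin d)) (hxstar : P xstar = 0)
    (π : EuclideanSpace ℝ (Fin d) → EuclideanSpace ℝ (Fin d))
    (hπdef : ∀ x, π x = P x + xstar)
    (hπmin : ∀ x y, f (π x) ≤ f y)
    (hsc : ∀ x, ⟪gradient f x, x - π x⟫ ≥ f x - f (π x) + μ / 2 * ‖x - π x‖ ^ 2)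
    (hnc : ∀ x v, ⟪gradient f (x + v), v⟫ ≥ f (x + v) - f x - ε / 2 * ‖v‖ ^ 2)
    (ρ : ℝ) (hρ : ρ = (1 - Real.sqrt (μ * η)) / (1 + Real.sqrt (μ * η)))
    (x x' v : ℕ → EuclideanSpace ℝ (Fin d))
    (hx' : ∀ n, x' n = x n + Real.sqrt η • v n)
    (hxrec : ∀ n, x (n + 1) = x' n - η • gradient f (x' n))
    (hvrec : ∀ n, v (n + 1) = ρ • (v n - Real.sqrt η • gradient f (x' n)))
    (Lyap : ℕ → ℝ)
    (hLyap : ∀ n, Lyap n =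
      f (x n) - f (π (x n)) +
      1 / 2 * ‖(v n - P (v n)) + Real.sqrt μ • (x' n - π (x' n))‖ ^ 2 +
      (1 + Real.sqrt (μ * η)) ^ 2 / (2 * (1 - Real.sqrt (μ * η))) * ‖P (v n)‖ ^ 2) :
    ∀ n, Lyap (n + 1) ≤ (1 - Real.sqrt (μ * η)) * Lyap n := by
  have hηL' : η * L ≤ 1 := (le_div_iff₀ hL).mp hηL
  have hμη : μ * η ≤ 1 := by nlinarith
  have hηK : η * L.toNNReal ≤ 1 := by rwa [Real.coe_toNNReal _ hL.le]
  have hLyap_eq : ∀ n, Lyap n = nesterovLyapunov f P π μ η (x n) (v n) := fun n ↦ by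
    rw [hLyap, hx']
    rfl
  intro n
  rw [hLyap_eq, hLyap_eq, hxrec, hvrec, hx']
  exact (nesterovLyapunov_gradient_step_le (hf.differentiable one_ne_zero) hlip hμ.le hη.le hηK
    hPproj hPsym hxstar hπdef hπmin hρ _ _).trans
    (nesterovLyapunovBound_le hμ.le hη hμη hεbound hPproj hPsym hπmin hsc hnc _ _)

theorem stmt_17 {d : ℕ} (f : EuclideanSpace ℝ (Fin d) → ℝ) (L μ η ε : ℝ)
    (hL : 0 < L) (hμ : 0 < μ) (hμL : μ ≤ L) (hη : 0 < η) (hηL : η ≤ 1 / L)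
    (hε : 0 ≤ ε) (hεbound : ε ≤ Real.sqrt (μ / η))
    (hf : ContDiff ℝ 1 f)
    (hlip : LipschitzWith (Real.toNNReal L) (gradient f))
    (P : EuclideanSpace ℝ (Fin d) →L[ℝ] EuclideanSpace ℝ (Fin d))
    (hPproj : ∀ x, P (P x) = P x)
    (hPsym : ∀ x y, ⟪P x, y⟫ = ⟪x, P y⟫)
    (xstar : EuclideanSpace ℝ (Fin d)) (hxstar : P xstar = 0)
    (π : EuclideanSpace ℝ (Fin d) → EuclideanSpace ℝ (Fin d))
    (hπdef : ∀ x, π x = P x + xstar)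
    (hπmin : ∀ x y, f (π x) ≤ f y)
    (hsc : ∀ x, ⟪gradient f x, x - π x⟫ ≥ f x - f (π x) + μ / 2 * ‖x - π x‖ ^ 2)
    (hnc : ∀ x v, ⟪gradient f (x + v), v⟫ ≥ f (x + v) - f x - ε / 2 * ‖v‖ ^ 2)
    (ρ : ℝ) (hρ : ρ = (1 - Real.sqrt (μ * η)) / (1 + Real.sqrt (μ * η)))
    (x x' v : ℕ → EuclideanSpace ℝ (Fin d))
    (hx' : ∀ n, x' n = x n + Real.sqrt η • v n)
    (hxrec : ∀ n, x (n + 1) = x' n - η • gradient f (x' n))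
    (hvrec : ∀ n, v (n + 1) = ρ • (v n - Real.sqrt η • gradient f (x' n)))
    (Lyap : ℕ → ℝ)
    (hLyap : ∀ n, Lyap n =
      f (x n) - f (π (x n)) +
      1 / 2 * ‖(v n - P (v n)) + Real.sqrt μ • (x' n - π (x' n))‖ ^ 2 +
      (1 + Real.sqrt (μ * η)) ^ 2 / (2 * (1 - Real.sqrt (μ * η))) * ‖P (v n)‖ ^ 2) :
    ∀ n, Lyap (n + 1) ≤ (1 - Real.sqrt (μ * η)) * Lyap n :=
  stmt_17_general f L μ η ε hL hμ hμL hη hηL hεbound hf hlip P hPproj hPsym xstar hxstar π hπdef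
    hπmin hsc hnc ρ hρ x x' v hx' hxrec hvrec Lyap hLyap
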